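/- For the generator-based construction G₀ = ∅, G_{n+1} = G_n ∪ {x_n | 1 ∉ (G_n ∪ {x_n})}, one has (G_n) = m_n for all n, where m_n are the ideals of the recursive construction; moreover, with G = ⋃_n G_n, the set G is itself an ideal and G = m. -/
import Mathlib


/-- The recursive construction: `m₀ = {0}`,
`m_{n+1} = m_n + ({x_n | 1 ∉ m_n + (x_n)})`, where the negation `¬φ`
is interpreted as `φ → (1 = 0)` in the ring. -/
def mSeq {A : Type*} [CommRing A] (x : ℕ → A) : ℕ → Ideal A
  | 0 => ⊥
  | n + 1 => mSeq x n ⊔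
      Ideal.span {y | y = x n ∧ ((1 : A) ∈ mSeq x n ⊔ Ideal.span {x n} → (1 : A) = 0)}

/-- The union `m = ⋃ₙ mₙ`, as a set. -/
def mUnion {A : Type*} [CommRing A] (x : ℕ → A) : Set A :=
  ⋃ n, (mSeq x n : Set A)

/-- The generator-based construction: `G₀ = ∅`,
`G_{n+1} = G_n ∪ {x_n | 1 ∉ (G_n ∪ {x_n})}`. -/
def GSeq {A : Type*} [CommRing A] (x : ℕ → A) : ℕ → Set A
  | 0 => ∅
  | n + 1 => GSeq x n ∪
      {y | y = x n ∧ ((1 : A) ∈ Ideal.span (GSeq x n ∪ {x n}) → (1 : A) = 0)}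

/-- The union `G = ⋃ₙ Gₙ`. -/
def GUnion {A : Type*} [CommRing A] (x : ℕ → A) : Set A :=
  ⋃ n, GSeq x n

lemma mSeq_mono {A : Type*} [CommRing A] (x : ℕ → A) : Monotone (mSeq x) := by
  apply monotone_nat_of_le_succ
  intro n
  exact le_sup_left

lemma span_GSeq {A : Type*} [CommRing A] (x : ℕ → A) :
    ∀ n, Ideal.span (GSeq x n) = mSeq x n := by
  intro n
  induction n with
  | zero => simp [GSeq, mSeq, Ideal.span_empty]
  | succ n ih =>
    have hsp : Ideal.span (GSeq x n ∪ {x n}) = mSeq x n ⊔ Ideal.span {x n} := by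
      rw [Ideal.span_union, ih]
    have hset : {y | y = x n ∧ ((1 : A) ∈ Ideal.span (GSeq x n ∪ {x n}) → (1 : A) = 0)}
        = {y | y = x n ∧ ((1 : A) ∈ mSeq x n ⊔ Ideal.span {x n} → (1 : A) = 0)} := by
      rw [hsp]
    show Ideal.span (GSeq x n ∪ _) = _
    rw [Ideal.span_union, ih, hset]
    rfl

lemma one_mem_mSeq {A : Type*} [CommRing A] (x : ℕ → A) :
    ∀ n, (1 : A) ∈ mSeq x n → (1 : A) = 0 := by
  intro n
  induction n with
  | zero => simp [mSeq]
  | succ n ih =>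
    intro h1
    by_cases hP : ((1 : A) ∈ mSeq x n ⊔ Ideal.span {x n} → (1 : A) = 0)
    · apply hP
      have : mSeq x (n + 1) ≤ mSeq x n ⊔ Ideal.span {x n} := by
        apply sup_le le_sup_left
        refine le_trans (Ideal.span_mono fun y hy => ?_) le_sup_right
        exact hy.1 ▸ rfl
      exact this h1
    · have hS : {y | y = x n ∧ ((1 : A) ∈ mSeq x n ⊔ Ideal.span {x n} → (1 : A) = 0)}
          = (∅ : Set A) := by
        ext y
        simp only [Set.mem_setOf_eq, Set.mem_empty_iff_false, iff_false, not_and]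
        intro _ hy; exact hP hy
      have : mSeq x (n + 1) = mSeq x n := by
        show mSeq x n ⊔ _ = mSeq x n
        rw [hS, Ideal.span_empty, sup_bot_eq]
      exact ih (this ▸ h1)

/-- `(Gₙ) = mₙ` for all `n`; moreover `G = ⋃ₙ Gₙ` is itself an ideal and
`G = m`. -/
theorem GSeq_span_eq_mSeq {A : Type*} [CommRing A] (x : ℕ → A)
    (hx : Function.Surjective x) :
    (∀ n : ℕ, Ideal.span (GSeq x n) = mSeq x n) ∧
    (∃ I : Ideal A, (I : Set A) = GUnion x) ∧
    GUnion x = mUnion x := by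
  have hspan := span_GSeq x
  -- G_n ⊆ m_n
  have hGm : ∀ n, GSeq x n ⊆ (mSeq x n : Set A) := by
    intro n
    calc GSeq x n ⊆ (Ideal.span (GSeq x n) : Set A) := Ideal.subset_span
    _ = _ := by rw [hspan n]
  have hGM : GUnion x ⊆ mUnion x := by
    intro a ha
    obtain ⟨n, hn⟩ := Set.mem_iUnion.mp ha
    exact Set.mem_iUnion.mpr ⟨n, hGm n hn⟩
  have hMG : mUnion x ⊆ GUnion x := by
    intro a ha
    obtain ⟨n, hn⟩ := Set.mem_iUnion.mp ha
    obtain ⟨k, rfl⟩ := hx a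
    apply Set.mem_iUnion.mpr ⟨k + 1, ?_⟩
    refine Or.inr ⟨rfl, ?_⟩
    intro h1
    have h1' : (1 : A) ∈ mSeq x k ⊔ Ideal.span {x k} := by
      rwa [Ideal.span_union, hspan k] at h1
    apply one_mem_mSeq x (max k n)
    have hle : mSeq x k ⊔ Ideal.span {x k} ≤ mSeq x (max k n) := by
      apply sup_le (mSeq_mono x (le_max_left k n))
      rw [Ideal.span_le, Set.singleton_subset_iff]
      exact mSeq_mono x (le_max_right k n) hn
    exact hle h1'
  have hEq : GUnion x = mUnion x := Set.Subset.antisymm hGM hMG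
  refine ⟨hspan, ⟨⨆ n, mSeq x n, ?_⟩, hEq⟩
  rw [hEq]
  have : (↑(⨆ n, mSeq x n) : Set A) = ⋃ n, (mSeq x n : Set A) :=
    Submodule.coe_iSup_of_chain ⟨mSeq x, mSeq_mono x⟩
  exact this
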